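/- For k ∈ ℝ define H_k(s) = s_k(s)·ȳ_k(s), where ȳ_k(s) = (1 − c_k(s))/k for k ≠ 0 and s²/2 for k = 0. Then H_k is a strictly increasing continuous bijection from I_k to J_k, where I_k = [0,∞) and J_k = [0,∞) if k ≤ 0, and I_k = [0, π/(2√k)] and J_k = [0, k^{−3/2}] if k > 0. -/

import Mathlib

/-- The generalized cosine `c_k`, solving `u'' + k u = 0`, `u(0)=1`, `u'(0)=0`. -/
noncomputable def ck (k s : ℝ) : ℝ :=
  if 0 < k then Real.cos (Real.sqrt k * s)
  else if k = 0 then 1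
  else Real.cosh (Real.sqrt (-k) * s)

/-- The generalized sine `s_k`, solving `u'' + k u = 0`, `u(0)=0`, `u'(0)=1`. -/
noncomputable def sk (k s : ℝ) : ℝ :=
  if 0 < k then Real.sin (Real.sqrt k * s) / Real.sqrt k
  else if k = 0 then s
  else Real.sinh (Real.sqrt (-k) * s) / Real.sqrt (-k)

/-- The function `ȳ_k`, solving `y''' + ky' = 0`, `y(0)=0`, `y'(0)=0`, `y''(0)=1`. -/
noncomputable def ybar (k s : ℝ) : ℝ := if k = 0 then s ^ 2 / 2 else (1 - ck k s) / k

/-- `H_k(s) = s_k(s)·ȳ_k(s)`. -/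
noncomputable def Hk (k s : ℝ) : ℝ := sk k s * ybar k s

/-- Product of two nonnegative strictly monotone functions is strictly monotone. -/
lemma mul_strictMonoOn' {f g : ℝ → ℝ} {s : Set ℝ}
    (hf : StrictMonoOn f s) (hg : StrictMonoOn g s)
    (hf0 : ∀ x ∈ s, 0 ≤ f x) (hg0 : ∀ x ∈ s, 0 ≤ g x) :
    StrictMonoOn (fun x => f x * g x) s := by
  intro x hx y hy hxy
  have h1 : f x * g x ≤ f x * g y :=
    mul_le_mul_of_nonneg_left (hg hx hy hxy).le (hf0 x hx)
  have h2 : f x * g y < f y * g y :=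
    mul_lt_mul_of_pos_right (hf hx hy hxy) (lt_of_le_of_lt (hg0 x hx) (hg hx hy hxy))
  exact h1.trans_lt h2

lemma tendsto_sinh_atTop' : Filter.Tendsto Real.sinh Filter.atTop Filter.atTop := by
  apply Filter.tendsto_atTop_mono' Filter.atTop
    (f₁ := fun x => (Real.exp x + -1) / 2)
  · filter_upwards [Filter.eventually_ge_atTop (0 : ℝ)] with x hx
    rw [Real.sinh_eq]
    have h1 : Real.exp (-x) ≤ 1 := Real.exp_le_one_iff.2 (by linarith)
    gcongr
    linarith
  · exact (Filter.tendsto_atTop_add_const_right _ (-1) Real.tendsto_exp_atTop).atTop_div_const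
      (by norm_num)

lemma tendsto_cosh_atTop' : Filter.Tendsto Real.cosh Filter.atTop Filter.atTop := by
  apply Filter.tendsto_atTop_mono (f := fun x => Real.exp x / 2)
  · intro x
    rw [Real.cosh_eq]
    have h1 : 0 ≤ Real.exp (-x) := (Real.exp_pos _).le
    gcongr
    linarith
  · exact Real.tendsto_exp_atTop.atTop_div_const (by norm_num)

/-- `H_k` is a strictly increasing continuous bijection from
`I_k` to `J_k`, where `I_k = J_k = [0,∞)` for `k ≤ 0`, and `I_k = [0, π/(2√k)]`,
`J_k = [0, k^{−3/2}]` for `k > 0`. -/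
theorem Hk_strictMono_bijOn (k : ℝ) :
    StrictMonoOn (Hk k)
      (if 0 < k then Set.Icc 0 (Real.pi / (2 * Real.sqrt k)) else Set.Ici 0) ∧
    ContinuousOn (Hk k)
      (if 0 < k then Set.Icc 0 (Real.pi / (2 * Real.sqrt k)) else Set.Ici 0) ∧
    Set.BijOn (Hk k)
      (if 0 < k then Set.Icc 0 (Real.pi / (2 * Real.sqrt k)) else Set.Ici 0)
      (if 0 < k then Set.Icc 0 (k ^ (-(3:ℝ)/2)) else Set.Ici 0) := by
  by_cases hk : 0 < k
  · -- case k > 0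
    simp only [if_pos hk]
    set r := Real.sqrt k with hr_def
    have hr : 0 < r := Real.sqrt_pos.2 hk
    set a := Real.pi / (2 * r) with ha_def
    have ha0 : 0 ≤ a := by positivity
    have hra : r * a = Real.pi / 2 := by
      rw [ha_def]; field_simp
    have hH : Hk k = fun s => Real.sin (r * s) / r * ((1 - Real.cos (r * s)) / k) := by
      funext s
      simp [Hk, sk, ybar, ck, hk, hk.ne', hr_def]
    have hmem : ∀ x ∈ Set.Icc (0:ℝ) a, r * x ∈ Set.Icc (0:ℝ) (Real.pi / 2) := by
      intro x hx
      refine ⟨mul_nonneg hr.le hx.1, ?_⟩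
      rw [← hra]; exact mul_le_mul_of_nonneg_left hx.2 hr.le
    have hpi2 : Real.pi / 2 ≤ Real.pi := by linarith [Real.pi_pos]
    -- strict monotonicity
    have hmono : StrictMonoOn (Hk k) (Set.Icc 0 a) := by
      rw [hH]
      apply mul_strictMonoOn'
      · intro x hx y hy hxy
        have h1 := hmem x hx
        have h2 := hmem y hy
        have hs : Real.sin (r * x) < Real.sin (r * y) :=
          Real.strictMonoOn_sin ⟨by linarith [h1.1, Real.pi_pos], h1.2⟩
            ⟨by linarith [h2.1, Real.pi_pos], h2.2⟩ (by gcongr)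
        exact (div_lt_div_iff_of_pos_right hr).2 hs
      · intro x hx y hy hxy
        have h1 := hmem x hx
        have h2 := hmem y hy
        have hc : Real.cos (r * y) < Real.cos (r * x) :=
          Real.strictAntiOn_cos ⟨h1.1, h1.2.trans hpi2⟩ ⟨h2.1, h2.2.trans hpi2⟩ (by gcongr)
        exact (div_lt_div_iff_of_pos_right hk).2 (by linarith)
      · intro x hx
        have h1 := hmem x hx
        have : 0 ≤ Real.sin (r * x) :=
          Real.sin_nonneg_of_nonneg_of_le_pi h1.1 (h1.2.trans hpi2)
        positivity
      · intro x hx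
        have : Real.cos (r * x) ≤ 1 := Real.cos_le_one _
        have h2 : (0:ℝ) ≤ 1 - Real.cos (r * x) := by linarith
        positivity
    have hcont : ContinuousOn (Hk k) (Set.Icc 0 a) := by
      rw [hH]
      fun_prop
    have hH0 : Hk k 0 = 0 := by rw [hH]; simp
    have hHa : Hk k a = k ^ (-(3:ℝ)/2) := by
      rw [hH]
      simp only [hra]
      rw [Real.sin_pi_div_two, Real.cos_pi_div_two]
      rw [show (-(3:ℝ)/2) = -(3/2) by ring, Real.rpow_neg hk.le,
        show ((3:ℝ)/2) = 1 + 1/2 by ring, Real.rpow_add hk, Real.rpow_one,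
        ← Real.sqrt_eq_rpow, ← hr_def]
      field_simp
      ring
    refine ⟨hmono, hcont, ?_, hmono.injOn, ?_⟩
    · intro x hx
      have m := hmono.monotoneOn
      constructor
      · rw [← hH0]; exact m ⟨le_rfl, ha0⟩ hx hx.1
      · rw [← hHa]; exact m hx ⟨ha0, le_rfl⟩ hx.2
    · have := intermediate_value_Icc ha0 hcont
      rw [hH0, hHa] at this
      exact this
  · -- case k ≤ 0
    simp only [if_neg hk]
    by_cases hk0 : k = 0
    · -- k = 0
      subst hk0
      have hH : Hk 0 = fun s => s * (s ^ 2 / 2) := by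
        funext s; simp [Hk, sk, ybar]
      have hmono : StrictMonoOn (Hk 0) (Set.Ici 0) := by
        rw [hH]
        apply mul_strictMonoOn' strictMonoOn_id
        · intro x hx y hy hxy
          have : x ^ 2 < y ^ 2 := by
            apply pow_lt_pow_left₀ hxy hx
            norm_num
          linarith
        · exact fun x hx => hx
        · intro x hx
          have : (0:ℝ) ≤ x := hx
          positivity
      have hcont : ContinuousOn (Hk 0) (Set.Ici 0) := by
        rw [hH]; fun_prop
      have hH0 : Hk 0 0 = 0 := by rw [hH]; simp
      have htop : Filter.Tendsto (Hk 0) Filter.atTop Filter.atTop := by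
        rw [hH]
        exact Filter.tendsto_id.atTop_mul_atTop₀
          ((Filter.tendsto_pow_atTop (by norm_num)).atTop_div_const (by norm_num))
      refine ⟨hmono, hcont, ?_, hmono.injOn, ?_⟩
      · intro x hx
        have m := hmono.monotoneOn
        have := m Set.self_mem_Ici hx hx
        rw [hH0] at this
        exact this
      · have := (isPreconnected_Ici (a := (0:ℝ))).intermediate_value_Ici
          Set.self_mem_Ici (Filter.le_principal_iff.2 (Filter.Ici_mem_atTop 0)) hcont htop
        rw [hH0] at this
        exact this
    · -- k < 0
      have hkneg : k < 0 := lt_of_le_of_ne (not_lt.1 hk) hk0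
      set c := Real.sqrt (-k) with hc_def
      have hc : 0 < c := Real.sqrt_pos.2 (by linarith)
      have hnk : (0:ℝ) < -k := by linarith
      have hH : Hk k = fun s =>
          Real.sinh (c * s) / c * ((Real.cosh (c * s) - 1) / (-k)) := by
        funext s
        simp only [Hk, sk, ybar, ck, if_neg hk, if_neg hk0, hc_def]
        congr 1
        rw [div_neg, ← neg_div]
        ring_nf
      have hmono : StrictMonoOn (Hk k) (Set.Ici 0) := by
        rw [hH]
        apply mul_strictMonoOn'
        · intro x hx y hy hxy
          have : Real.sinh (c * x) < Real.sinh (c * y) :=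
            Real.sinh_strictMono (by gcongr)
          exact (div_lt_div_iff_of_pos_right hc).2 this
        · intro x hx y hy hxy
          have hx' : (0:ℝ) ≤ x := hx
          have hy' : (0:ℝ) ≤ y := hy
          have : Real.cosh (c * x) < Real.cosh (c * y) :=
            Real.cosh_strictMonoOn (Set.mem_Ici.2 (by positivity))
              (Set.mem_Ici.2 (by positivity)) (by gcongr)
          exact (div_lt_div_iff_of_pos_right hnk).2 (by linarith)
        · intro x hx
          have hx' : (0:ℝ) ≤ x := hx
          have h1 : 0 ≤ Real.sinh (c * x) := by
            have : Real.sinh 0 ≤ Real.sinh (c * x) := Real.sinh_le_sinh.2 (by positivity)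
            simpa using this
          exact div_nonneg h1 hc.le
        · intro x hx
          have := Real.one_le_cosh (c * x)
          have h2 : (0:ℝ) ≤ Real.cosh (c * x) - 1 := by linarith
          positivity
      have hcont : ContinuousOn (Hk k) (Set.Ici 0) := by
        rw [hH]; fun_prop
      have hH0 : Hk k 0 = 0 := by rw [hH]; simp
      have hcs : Filter.Tendsto (fun s : ℝ => c * s) Filter.atTop Filter.atTop :=
        Filter.tendsto_id.const_mul_atTop hc
      have htop : Filter.Tendsto (Hk k) Filter.atTop Filter.atTop := by
        rw [hH]
        apply Filter.Tendsto.atTop_mul_atTop₀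
        · exact ((tendsto_sinh_atTop'.comp hcs).atTop_div_const hc)
        · exact ((Filter.tendsto_atTop_add_const_right _ (-1)
            (tendsto_cosh_atTop'.comp hcs)).atTop_div_const hnk).congr
            (fun s => by simp only [Function.comp_apply]; ring_nf)
      refine ⟨hmono, hcont, ?_, hmono.injOn, ?_⟩
      · intro x hx
        have m := hmono.monotoneOn
        have := m Set.self_mem_Ici hx hx
        rw [hH0] at this
        exact this
      · have := (isPreconnected_Ici (a := (0:ℝ))).intermediate_value_Ici
          Set.self_mem_Ici (Filter.le_principal_iff.2 (Filter.Ici_mem_atTop 0)) hcont htop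
        rw [hH0] at this
        exact this
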